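/- Let (Ω, 𝔽, ℙ) be a probability space and H a real inner product space that is a complete normed space (a real Hilbert space). Let g : Ω → H be Bochner integrable, and let C : Ω → ℝ be integrable with C > 0 almost surely and such that C·g is Bochner integrable. Define v := 𝔼[g] and Z := ⟨g, v⟩, and suppose Cov(C, Z) := 𝔼[C·Z] − 𝔼[C]·𝔼[Z] ≥ 0 and v ≠ 0. Then ⟨𝔼[C·g], v⟩ > 0. -/

import Mathlib

/-! The reweighted gradient pairs with `v` as `𝔼[C Z] = Cov(C, Z) + 𝔼[C] 𝔼[Z]`, and
`𝔼[Z] = ⟨𝔼[g], v⟩ = ‖v‖²`. A nonnegative covariance thus leaves at least `𝔼[C] ‖v‖²`, which is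
positive because `C > 0` almost surely and `v ≠ 0`. -/

open MeasureTheory

theorem MeasureTheory.integral_pos_of_ae_pos {α : Type*} [MeasurableSpace α] {μ : Measure α}
    [NeZero μ] {f : α → ℝ} (hf : Integrable f μ) (hpos : ∀ᵐ x ∂μ, 0 < f x) :
    0 < ∫ x, f x ∂μ := by
  rw [integral_pos_iff_support_of_nonneg_ae (hpos.mono fun _ hx => hx.le) hf]
  have hsupport : Function.support f =ᵐ[μ] (Set.univ : Set α) :=
    Filter.eventuallyEq_univ.2 (hpos.mono fun _ hx => hx.ne')
  rw [measure_congr hsupport]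
  exact Measure.measure_univ_pos.2 (NeZero.ne μ)

section InnerIntegral

variable {α : Type*} [MeasurableSpace α] {μ : Measure α}
  {E : Type*} [NormedAddCommGroup E] [InnerProductSpace ℝ E] [CompleteSpace E]

theorem inner_integral_smul_eq_integral_mul_inner {c : α → ℝ} {f : α → E}
    (hcf : Integrable (fun x => c x • f x) μ) (w : E) :
    inner ℝ (∫ x, c x • f x ∂μ) w = ∫ x, c x * inner ℝ (f x) w ∂μ := by
  rw [real_inner_comm, ← integral_inner hcf w]
  simp only [real_inner_smul_right, real_inner_comm w]

theorem integral_inner_integral_eq_norm_sq {f : α → E} (hf : Integrable f μ) :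
    ∫ x, inner ℝ (f x) (∫ y, f y ∂μ) ∂μ = ‖∫ y, f y ∂μ‖ ^ 2 := by
  simp_rw [real_inner_comm (∫ y, f y ∂μ)]
  rw [integral_inner hf, real_inner_self_eq_norm_sq]

end InnerIntegral

/-- Gradient Alignment and Effectiveness of HACPO (abstract form): if `C > 0` a.s.,
`Cov(C, Z) ≥ 0` and `v ≠ 0`, then `⟨𝔼[C·g], v⟩ > 0`. -/
theorem hacpo_gradient_alignment
    {Ω : Type*} [MeasurableSpace Ω] (P : Measure Ω) [IsProbabilityMeasure P]
    {H : Type*} [NormedAddCommGroup H] [InnerProductSpace ℝ H] [CompleteSpace H]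
    (g : Ω → H) (C : Ω → ℝ)
    (hg : Integrable g P) (hC : Integrable C P)
    (hCpos : ∀ᵐ x ∂P, 0 < C x)
    (hCg : Integrable (fun x => C x • g x) P)
    (hcov : (∫ x, C x * (inner ℝ (g x) (∫ y, g y ∂P) : ℝ) ∂P)
        - (∫ x, C x ∂P) * (∫ x, (inner ℝ (g x) (∫ y, g y ∂P) : ℝ) ∂P) ≥ 0)
    (hv : (∫ y, g y ∂P) ≠ 0) :
    (inner ℝ (∫ x, C x • g x ∂P) (∫ y, g y ∂P) : ℝ) > 0 := by
  have hEC : 0 < ∫ x, C x ∂P := integral_pos_of_ae_pos hC hCpos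
  have hEZ : 0 < ‖∫ y, g y ∂P‖ ^ 2 := pow_pos (norm_pos_iff.2 hv) 2
  rw [integral_inner_integral_eq_norm_sq hg] at hcov
  rw [inner_integral_smul_eq_integral_mul_inner hCg]
  linarith [mul_pos hEC hEZ]
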